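/- arXiv:2304.13138 — 2 statements merged into one kernel-verified Lean document; each statement's English description precedes it below -/
import Mathlib

section
/- Let X ⊆ ℝ^d be convex, φ : ℝ^d → ℝ differentiable and 1-strongly convex with respect to a norm ‖·‖, f continuously differentiable, x₀ ∈ X, η > 0, and let x⁺ minimize x ↦ η⟨∇f(x₀), x⟩ + D_φ(x, x₀) over X. If x⁺ ≠ x₀, then ⟨∇f(x₀), x⁺ − x₀⟩ ≤ −(1/η)‖x⁺ − x₀‖² < 0. -/
/-!
Move from the minimiser `x⁺` a fraction `t` of the way back to `x₀`. Strong convexity of `φ`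
along the segment makes the Bregman term drop by at least `t (D(x⁺, x₀) + (1 - t)/2 ‖x⁺ - x₀‖²)`,
while the linear term grows by `t η ⟨∇f(x₀), x₀ - x⁺⟩`; optimality of `x⁺` and `t → 0` give
`η ⟨∇f(x₀), x₀ - x⁺⟩ ≥ D(x⁺, x₀) + ½‖x⁺ - x₀‖² ≥ ‖x⁺ - x₀‖²`.
-/

open RealInnerProductSpace Filter Set

lemma le_of_forall_mem_Ioc_le_add_mul {a b c : ℝ} (h : ∀ t ∈ Ioc (0 : ℝ) 1, a ≤ b + t * c) :
    a ≤ b := by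
  have hlim : Tendsto (fun t : ℝ => b + t * c) (nhdsWithin 0 (Ioi 0)) (nhds b) := by
    have hcont : Continuous fun t : ℝ => b + t * c := by fun_prop
    simpa using (hcont.tendsto 0).mono_left nhdsWithin_le_nhds
  exact ge_of_tendsto hlim <|
    eventually_of_mem (Ioc_mem_nhdsGT zero_lt_one) h

section Bregman

variable {E : Type*} [NormedAddCommGroup E] [InnerProductSpace ℝ E]

/-- `G` plays the role of `∇φ`; any subgradient selection will do. -/
def bregman (φ : E → ℝ) (G : E → E) (x y : E) : ℝ :=
  φ x - φ y - ⟪G y, x - y⟫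

variable {φ : E → ℝ} {G : E → E} {N : E → ℝ}

lemma half_sq_le_bregman
    (hSC : ∀ x y, φ x + ⟪G x, y - x⟫ + (1/2) * (N (y - x))^2 ≤ φ y) (x y : E) :
    (1/2) * (N (x - y))^2 ≤ bregman φ G x y := by
  have := hSC y x
  unfold bregman
  linarith

lemma apply_add_smul_sub_add_le
    (hNhom : ∀ (c : ℝ) z, N (c • z) = |c| * N z)
    (hSC : ∀ x y, φ x + ⟪G x, y - x⟫ + (1/2) * (N (y - x))^2 ≤ φ y)
    (x y : E) {t : ℝ} (ht₀ : 0 ≤ t) (ht₁ : t ≤ 1) :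
    φ (x + t • (y - x)) + t * (1 - t) / 2 * (N (x - y))^2 ≤ (1 - t) * φ x + t * φ y := by
  set m := x + t • (y - x)
  have hx : x - m = t • (x - y) := by simp only [m]; module
  have hy : y - m = (t - 1) • (x - y) := by simp only [m]; module
  have hSCx := hSC m x
  have hSCy := hSC m y
  rw [hx, hNhom, abs_of_nonneg ht₀, real_inner_smul_right] at hSCx
  rw [hy, hNhom, abs_of_nonpos (by linarith), real_inner_smul_right] at hSCy
  -- the weights `1 - t` and `t` cancel the two subgradient terms
  have := add_le_add (mul_le_mul_of_nonneg_left hSCx (sub_nonneg.2 ht₁))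
    (mul_le_mul_of_nonneg_left hSCy ht₀)
  linarith

lemma bregman_add_half_sq_le_inner_of_isMinOn
    (hNhom : ∀ (c : ℝ) z, N (c • z) = |c| * N z)
    (hSC : ∀ x y, φ x + ⟪G x, y - x⟫ + (1/2) * (N (y - x))^2 ≤ φ y)
    {X : Set E} (hX : Convex ℝ X) {x₀ xp g : E} (hx₀ : x₀ ∈ X) (hxp : xp ∈ X)
    (hmin : IsMinOn (fun x => ⟪g, x⟫ + bregman φ G x x₀) X xp) :
    bregman φ G xp x₀ + (1/2) * (N (xp - x₀))^2 ≤ ⟪g, x₀ - xp⟫ := by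
  refine le_of_forall_mem_Ioc_le_add_mul (c := (1/2) * (N (xp - x₀))^2) fun t ⟨ht₀, ht₁⟩ => ?_
  have hopt := isMinOn_iff.1 hmin _ (hX.add_smul_sub_mem hxp hx₀ ⟨ht₀.le, ht₁⟩)
  have hseg := apply_add_smul_sub_add_le hNhom hSC xp x₀ ht₀.le ht₁
  have hm : xp + t • (x₀ - xp) - x₀ = (1 - t) • (xp - x₀) := by module
  simp only [bregman, hm, inner_add_right, real_inner_smul_right] at hopt
  have : t * (bregman φ G xp x₀ + (1 - t) / 2 * (N (xp - x₀))^2) ≤ t * ⟪g, x₀ - xp⟫ := by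
    unfold bregman
    linarith
  linarith [le_of_mul_le_mul_left this ht₀]

end Bregman

theorem mirror_descent_negative_correlation_general {d : ℕ}
    (X : Set (EuclideanSpace ℝ (Fin d))) (hXconv : Convex ℝ X)
    (f φ : EuclideanSpace ℝ (Fin d) → ℝ)
    (N : EuclideanSpace ℝ (Fin d) → ℝ)
    (hN0 : ∀ z, 0 ≤ N z) (hNdef : ∀ z, N z = 0 → z = 0)
    (hNhom : ∀ (c : ℝ) z, N (c • z) = |c| * N z)
    (hSC : ∀ x y, φ x + ⟪gradient φ x, y - x⟫ + (1/2) * (N (y - x))^2 ≤ φ y)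
    (x₀ : EuclideanSpace ℝ (Fin d)) (hx₀ : x₀ ∈ X)
    (η : ℝ) (hη : 0 < η)
    (D : EuclideanSpace ℝ (Fin d) → EuclideanSpace ℝ (Fin d) → ℝ)
    (hD : ∀ x y, D x y = φ x - φ y - ⟪gradient φ y, x - y⟫)
    (xp : EuclideanSpace ℝ (Fin d)) (hxpX : xp ∈ X)
    (hmin : ∀ x ∈ X, η * ⟪gradient f x₀, xp⟫ + D xp x₀ ≤ η * ⟪gradient f x₀, x⟫ + D x x₀)
    (hne : xp ≠ x₀) :
    ⟪gradient f x₀, xp - x₀⟫ ≤ -(1/η) * (N (xp - x₀))^2 ∧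
      -(1/η) * (N (xp - x₀))^2 < 0 := by
  obtain rfl : D = bregman φ (gradient φ) := funext₂ hD
  have hopt : IsMinOn (fun x => ⟪η • gradient f x₀, x⟫ + bregman φ (gradient φ) x x₀) X xp :=
    isMinOn_iff.2 fun x hx => by simpa only [real_inner_smul_left] using hmin x hx
  have hdescent := bregman_add_half_sq_le_inner_of_isMinOn hNhom hSC hXconv hx₀ hxpX hopt
  have hbregman := half_sq_le_bregman hSC xp x₀
  have hpos : 0 < N (xp - x₀) :=
    (hN0 _).lt_of_ne' fun h => hne (sub_eq_zero.1 (hNdef _ h))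
  rw [real_inner_smul_left, ← neg_sub xp x₀, inner_neg_right] at hdescent
  constructor
  · rw [neg_mul, one_div_mul_eq_div, le_neg, div_le_iff₀ hη]
    linarith
  · have : 0 < 1 / η * (N (xp - x₀))^2 := by positivity
    linarith

/-- The mirror descent step makes negative correlation with the gradient,
quantified by the squared norm of the displacement. -/
theorem mirror_descent_negative_correlation {d : ℕ}
    (X : Set (EuclideanSpace ℝ (Fin d))) (hXconv : Convex ℝ X)
    (f φ : EuclideanSpace ℝ (Fin d) → ℝ)
    (hf : ContDiff ℝ 1 f) (hφ : Differentiable ℝ φ)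
    (N : EuclideanSpace ℝ (Fin d) → ℝ)
    (hN0 : ∀ z, 0 ≤ N z) (hNdef : ∀ z, N z = 0 → z = 0)
    (hNhom : ∀ (c : ℝ) z, N (c • z) = |c| * N z)
    (hNtri : ∀ y z, N (y + z) ≤ N y + N z)
    (hSC : ∀ x y, φ x + ⟪gradient φ x, y - x⟫ + (1/2) * (N (y - x))^2 ≤ φ y)
    (x₀ : EuclideanSpace ℝ (Fin d)) (hx₀ : x₀ ∈ X)
    (η : ℝ) (hη : 0 < η)
    (D : EuclideanSpace ℝ (Fin d) → EuclideanSpace ℝ (Fin d) → ℝ)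
    (hD : ∀ x y, D x y = φ x - φ y - ⟪gradient φ y, x - y⟫)
    (xp : EuclideanSpace ℝ (Fin d)) (hxpX : xp ∈ X)
    (hmin : ∀ x ∈ X, η * ⟪gradient f x₀, xp⟫ + D xp x₀ ≤ η * ⟪gradient f x₀, x⟫ + D x x₀)
    (hne : xp ≠ x₀) :
    ⟪gradient f x₀, xp - x₀⟫ ≤ -(1/η) * (N (xp - x₀))^2 ∧
      -(1/η) * (N (xp - x₀))^2 < 0 :=
  mirror_descent_negative_correlation_general X hXconv f φ N hN0 hNdef hNhom hSC x₀ hx₀ η hη D hD xp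
    hxpX hmin hne
end

section
/- Let A be a nonempty finite set, π, ρ ∈ Δ(A) with π(a) > 0 and ρ(a) > 0 for all a, q : A → ℝ, η > 0, and α > 0. Then the unique maximizer over π' ∈ Δ(A) of ⟨π', q⟩ − (1/η)·KL(π', π) − α·KL(π', ρ) is given by π⁺(a) ∝ (π(a)·exp(η q(a))·ρ(a)^{ηα})^{1/(1+αη)}. -/
/-!
With `c = 1/η + α`, the objective equals `c · (⟨p, g⟩ - ∑ p log p)` for the score
`g = (log π + η q + η α log ρ) / (1 + α η)`, and the MMD update is `softmax g`. The Gibbs variational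
identity `⟨p, g⟩ - ∑ p log p = log ∑ exp g - KL(p, softmax g)` then reduces both optimality and
uniqueness to Gibbs' inequality.
-/

namespace MagneticMirrorDescent

open Real Finset InformationTheory

variable {A : Type*} [Fintype A]

lemma mul_log_div_eq_sub (x : ℝ) {y : ℝ} (hy : y ≠ 0) :
    x * log (x / y) = x * log x - x * log y := by
  rcases eq_or_ne x 0 with rfl | hx
  · simp
  · rw [log_div hx hy]; ring

lemma sum_mul_log_div_eq_sum_mul_klFun {p t : A → ℝ} (ht : ∀ a, 0 < t a)
    (hsum : ∑ a, p a = ∑ a, t a) :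
    ∑ a, p a * log (p a / t a) = ∑ a, t a * klFun (p a / t a) := by
  have hterm : ∀ a, t a * klFun (p a / t a) = p a * log (p a / t a) + (t a - p a) := fun a => by
    have := (ht a).ne'
    rw [klFun_apply]; field_simp; ring
  simp only [hterm, sum_add_distrib, sum_sub_distrib, hsum, sub_self, add_zero]

section Gibbs

variable {p t : A → ℝ} (hp : ∀ a, 0 ≤ p a) (ht : ∀ a, 0 < t a) (hsum : ∑ a, p a = ∑ a, t a)
include hp ht hsum

lemma sum_mul_log_div_nonneg : 0 ≤ ∑ a, p a * log (p a / t a) := by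
  rw [sum_mul_log_div_eq_sum_mul_klFun ht hsum]
  exact sum_nonneg fun a _ => mul_nonneg (ht a).le (klFun_nonneg (div_nonneg (hp a) (ht a).le))

lemma eq_of_sum_mul_log_div_eq_zero (h : ∑ a, p a * log (p a / t a) = 0) : p = t := by
  rw [sum_mul_log_div_eq_sum_mul_klFun ht hsum, sum_eq_zero_iff_of_nonneg fun a _ =>
    mul_nonneg (ht a).le (klFun_nonneg (div_nonneg (hp a) (ht a).le))] at h
  funext a
  have hkl := (mul_eq_zero.mp (h a (mem_univ a))).resolve_left (ht a).ne'
  rw [klFun_eq_zero_iff (div_nonneg (hp a) (ht a).le), div_eq_one_iff_eq (ht a).ne'] at hkl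
  exact hkl

end Gibbs

lemma mmd_weight_eq_exp {μ ρ : ℝ} (hμ : 0 < μ) (hρ : 0 < ρ) (q η α : ℝ) :
    (μ * exp (η * q) * ρ ^ (η * α)) ^ ((1 : ℝ) / (1 + α * η)) =
      exp ((log μ + η * q + η * α * log ρ) / (1 + α * η)) := by
  have hρpow : 0 < ρ ^ (η * α) := rpow_pos_of_pos hρ _
  rw [rpow_def_of_pos (by positivity), log_mul (by positivity) hρpow.ne', log_mul hμ.ne'
    (exp_pos _).ne', log_exp, log_rpow hρ, mul_one_div]

lemma mmd_objective_eq {μ ρ : A → ℝ} (hμ : ∀ a, 0 < μ a) (hρ : ∀ a, 0 < ρ a) (p q : A → ℝ)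
    {η α : ℝ} (hη : η ≠ 0) (hd : 1 + α * η ≠ 0) :
    ∑ a, p a * q a - 1 / η * ∑ a, p a * log (p a / μ a) - α * ∑ a, p a * log (p a / ρ a) =
      (1 / η + α) * (∑ a, p a * ((log (μ a) + η * q a + η * α * log (ρ a)) / (1 + α * η)) -
        ∑ a, p a * log (p a)) := by
  simp only [mul_log_div_eq_sub _ (hμ _).ne', mul_log_div_eq_sub _ (hρ _).ne', mul_sub, mul_sum,
    ← sum_sub_distrib]
  refine sum_congr rfl fun a _ => ?_
  -- `field_simp` normalizes the denominator to `1 + η * α` and must see it is nonzero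
  rw [mul_comm α η] at hd ⊢
  field_simp
  ring

noncomputable def softmax (g : A → ℝ) (a : A) : ℝ := exp (g a) / ∑ b, exp (g b)

variable [Nonempty A]

lemma softmax_pos (g : A → ℝ) (a : A) : 0 < softmax g a :=
  div_pos (exp_pos _) (sum_pos (fun _ _ => exp_pos _) univ_nonempty)

lemma sum_softmax (g : A → ℝ) : ∑ a, softmax g a = 1 := by
  simp only [softmax, ← sum_div]
  exact div_self (sum_pos (fun _ _ => exp_pos _) univ_nonempty).ne'

lemma log_softmax (g : A → ℝ) (a : A) : log (softmax g a) = g a - log (∑ b, exp (g b)) := by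
  rw [softmax, log_div (exp_pos _).ne' (sum_pos (fun _ _ => exp_pos _) univ_nonempty).ne', log_exp]

lemma sum_mul_sub_sum_mul_log_eq_log_sum_exp_sub {p : A → ℝ} (hp : ∑ a, p a = 1) (g : A → ℝ) :
    ∑ a, p a * g a - ∑ a, p a * log (p a) =
      log (∑ b, exp (g b)) - ∑ a, p a * log (p a / softmax g a) := by
  simp only [mul_log_div_eq_sub _ (softmax_pos g _).ne', log_softmax, sum_sub_distrib, mul_sub,
    ← sum_mul, hp, one_mul]
  ring

end MagneticMirrorDescent

open MagneticMirrorDescent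

theorem mmd_unique_maximizer_general {A : Type} [Fintype A] [Nonempty A]
    (π ρ : A → ℝ) (hπ : ∀ a, 0 < π a)
    (hρ : ∀ a, 0 < ρ a)
    (q : A → ℝ) (η α : ℝ) (hη : 0 < η) (hα : 0 < α)
    (KL : (A → ℝ) → (A → ℝ) → ℝ)
    (hKL : ∀ p r, KL p r = ∑ a, p a * Real.log (p a / r a))
    (Z : ℝ)
    (hZ : Z = ∑ a, (π a * Real.exp (η * q a) * ρ a ^ (η * α)) ^ ((1:ℝ)/(1 + α * η)))
    (πp : A → ℝ)
    (hπp : ∀ a, πp a = (π a * Real.exp (η * q a) * ρ a ^ (η * α)) ^ ((1:ℝ)/(1 + α * η)) / Z) :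
    ((∀ a, 0 ≤ πp a) ∧ ∑ a, πp a = 1) ∧
      ∀ p : A → ℝ, (∀ a, 0 ≤ p a) → ∑ a, p a = 1 →
        ((∑ a, p a * q a) - (1/η) * KL p π - α * KL p ρ ≤
            (∑ a, πp a * q a) - (1/η) * KL πp π - α * KL πp ρ ∧
          ((∑ a, p a * q a) - (1/η) * KL p π - α * KL p ρ =
              (∑ a, πp a * q a) - (1/η) * KL πp π - α * KL πp ρ → p = πp)) := by
  have hKL' : KL = fun p r => ∑ a, p a * Real.log (p a / r a) := funext₂ hKL
  subst hKL'
  set g : A → ℝ := fun a =>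
    (Real.log (π a) + η * q a + η * α * Real.log (ρ a)) / (1 + α * η)
  have hπp_eq : πp = softmax g := by
    funext a
    simp only [hπp, hZ, mmd_weight_eq_exp (hπ _) (hρ _), softmax, g]
  subst hπp_eq
  have hc : 0 < 1 / η + α := by positivity
  have hobj : ∀ p : A → ℝ, ∑ a, p a = 1 →
      (∑ a, p a * q a) - 1 / η * ∑ a, p a * Real.log (p a / π a) -
          α * ∑ a, p a * Real.log (p a / ρ a) =
        (1 / η + α) * (Real.log (∑ a, Real.exp (g a)) -
          ∑ a, p a * Real.log (p a / softmax g a)) := fun p hp => by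
    rw [mmd_objective_eq hπ hρ p q hη.ne' (by positivity),
      ← sum_mul_sub_sum_mul_log_eq_log_sum_exp_sub hp]
  have hself : ∑ a, softmax g a * Real.log (softmax g a / softmax g a) = 0 := by
    simp [div_self (softmax_pos g _).ne']
  refine ⟨⟨fun a => (softmax_pos g a).le, sum_softmax g⟩, fun p hp hpsum => ?_⟩
  have hsum : ∑ a, p a = ∑ a, softmax g a := by rw [hpsum, sum_softmax]
  rw [hobj p hpsum, hobj _ (sum_softmax g), hself]
  refine ⟨?_, fun h => eq_of_sum_mul_log_div_eq_zero hp (softmax_pos g) hsum ?_⟩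
  · gcongr
    exact sum_mul_log_div_nonneg hp (softmax_pos g) hsum
  · linarith [mul_left_cancel₀ hc.ne' h]

/-- The magnetic mirror descent update is the unique maximizer of the doubly
KL-regularized linear objective over the probability simplex. -/
theorem mmd_unique_maximizer {A : Type} [Fintype A] [Nonempty A]
    (π ρ : A → ℝ) (hπ : ∀ a, 0 < π a) (hπsum : ∑ a, π a = 1)
    (hρ : ∀ a, 0 < ρ a) (hρsum : ∑ a, ρ a = 1)
    (q : A → ℝ) (η α : ℝ) (hη : 0 < η) (hα : 0 < α)
    (KL : (A → ℝ) → (A → ℝ) → ℝ)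
    (hKL : ∀ p r, KL p r = ∑ a, p a * Real.log (p a / r a))
    (Z : ℝ)
    (hZ : Z = ∑ a, (π a * Real.exp (η * q a) * ρ a ^ (η * α)) ^ ((1:ℝ)/(1 + α * η)))
    (πp : A → ℝ)
    (hπp : ∀ a, πp a = (π a * Real.exp (η * q a) * ρ a ^ (η * α)) ^ ((1:ℝ)/(1 + α * η)) / Z) :
    ((∀ a, 0 ≤ πp a) ∧ ∑ a, πp a = 1) ∧
      ∀ p : A → ℝ, (∀ a, 0 ≤ p a) → ∑ a, p a = 1 →
        ((∑ a, p a * q a) - (1/η) * KL p π - α * KL p ρ ≤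
            (∑ a, πp a * q a) - (1/η) * KL πp π - α * KL πp ρ ∧
          ((∑ a, p a * q a) - (1/η) * KL p π - α * KL p ρ =
              (∑ a, πp a * q a) - (1/η) * KL πp π - α * KL πp ρ → p = πp)) :=
  mmd_unique_maximizer_general π ρ hπ hρ q η α hη hα KL hKL Z hZ πp hπp
end
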